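/- Consider a Feynman–Kac model Q_{0:N}(u_{0:N}) ∝ M_0(u_0) G_0(u_0) ∏_{k=1}^N M_{k|k-1}(u_k | u_{k-1}) G_k(u_k, u_{k-1}) constructed from twisting functions l_k^y ≥ 0 via M_0 = q_0, G_0 = l_0^y, and M_{k|k-1}(u_k | u_{k-1}) G_k(u_k, u_{k-1}) = l_k^y(u_k) q_{k|k-1}(u_k | u_{k-1}) / l_{k-1}^y(u_{k-1}), with terminal constraint l_N^y(·) = f(y | ·). Then the time-N marginal of Q_{0:N} is proportional to f(y | u_N) q_N(u_N), where q_N is the time-N marginal of the Markov chain with initial density q_0 and transitions q_{k|k-1}; i.e., Q_N equals the posterior π(· | y) when q_N = π. -/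

import Mathlib

/-! The twisting telescopes: the factor `1 / l_{k-1}(u_{k-1})` in the `k`-th potential cancels the
twist `l_{k-1}` carried by the previous marginal, so by induction the unnormalized time-`k`
marginal is `l_k · q_k`, and at `k = N` the terminal constraint turns this into `f(y | ·) · q_N`. -/

open MeasureTheory

/-- The (unnormalized) time-marginal of the Feynman–Kac model
`Q_{0:N}(u_{0:N}) ∝ M_0(u_0) G_0(u_0) ∏_k M_{k|k-1}(u_k|u_{k-1}) G_k(u_k, u_{k-1})`. -/
noncomputable def FKmarg {d : ℕ} (M0 G0 : (Fin d → ℝ) → ℝ)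
    (M G : ℕ → (Fin d → ℝ) → (Fin d → ℝ) → ℝ) : ℕ → (Fin d → ℝ) → ℝ
  | 0 => fun u => M0 u * G0 u
  | k + 1 => fun u => ∫ u', M (k + 1) u u' * G (k + 1) u u' * FKmarg M0 G0 M G k u'

/-- The time-marginal of the Markov chain with initial density `q0` and transitions `q`. -/
noncomputable def qmarg {d : ℕ} (q0 : (Fin d → ℝ) → ℝ)
    (q : ℕ → (Fin d → ℝ) → (Fin d → ℝ) → ℝ) : ℕ → (Fin d → ℝ) → ℝ
  | 0 => q0
  | k + 1 => fun u => ∫ u', q (k + 1) u u' * qmarg q0 q k u'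

theorem FKmarg_eq_mul_qmarg {d : ℕ} {q0 : (Fin d → ℝ) → ℝ}
    {q : ℕ → (Fin d → ℝ) → (Fin d → ℝ) → ℝ} {l : ℕ → (Fin d → ℝ) → ℝ}
    {M0 G0 : (Fin d → ℝ) → ℝ} {M G : ℕ → (Fin d → ℝ) → (Fin d → ℝ) → ℝ}
    (hl : ∀ k u, l k u ≠ 0) (h0 : ∀ u, M0 u * G0 u = l 0 u * q0 u)
    (hMG : ∀ k u u', M (k + 1) u u' * G (k + 1) u u' = l (k + 1) u * q (k + 1) u u' / l k u') :
    ∀ k u, FKmarg M0 G0 M G k u = l k u * qmarg q0 q k u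
  | 0, u => h0 u
  | k + 1, u => by
    have hcancel : ∀ u', M (k + 1) u u' * G (k + 1) u u' * FKmarg M0 G0 M G k u' =
        l (k + 1) u * (q (k + 1) u u' * qmarg q0 q k u') := fun u' => by
      rw [hMG, FKmarg_eq_mul_qmarg hl h0 hMG k u']
      field_simp [hl k u']
    simp only [FKmarg, qmarg, hcancel, integral_const_mul]

theorem stmt6_general {d N : ℕ}
    (q0 : (Fin d → ℝ) → ℝ) (q : ℕ → (Fin d → ℝ) → (Fin d → ℝ) → ℝ)
    (l : ℕ → (Fin d → ℝ) → ℝ) (f : (Fin d → ℝ) → ℝ)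
    (M0 G0 : (Fin d → ℝ) → ℝ) (M G : ℕ → (Fin d → ℝ) → (Fin d → ℝ) → ℝ)
    (hl : ∀ k u, 0 < l k u)
    (hM0 : M0 = q0) (hG0 : G0 = l 0)
    (hMG : ∀ k u u', M (k + 1) u u' * G (k + 1) u u' =
      l (k + 1) u * q (k + 1) u u' / l k u')
    (hlN : ∀ u, l N u = f u) :
    (fun u => FKmarg M0 G0 M G N u / ∫ w, FKmarg M0 G0 M G N w) =
      fun u => f u * qmarg q0 q N u / ∫ w, f w * qmarg q0 q N w := by
  have hFK : ∀ u, FKmarg M0 G0 M G N u = f u * qmarg q0 q N u := fun u => by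
    rw [FKmarg_eq_mul_qmarg (fun k u => (hl k u).ne') (fun u => by rw [hM0, hG0, mul_comm]) hMG,
      hlN]
  simp only [hFK]

/-- In the twisted Feynman–Kac model with `M_0 = q_0`, `G_0 = l_0`,
`M_{k|k-1} G_k = l_k(u_k) q_{k|k-1}(u_k|u_{k-1}) / l_{k-1}(u_{k-1})` and terminal
constraint `l_N = f(y | ·)`, the normalized time-`N` marginal equals the posterior
`f(y|u_N) q_N(u_N) / Z_N`. -/
theorem stmt6 {d N : ℕ}
    (q0 : (Fin d → ℝ) → ℝ) (q : ℕ → (Fin d → ℝ) → (Fin d → ℝ) → ℝ)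
    (l : ℕ → (Fin d → ℝ) → ℝ) (f : (Fin d → ℝ) → ℝ)
    (M0 G0 : (Fin d → ℝ) → ℝ) (M G : ℕ → (Fin d → ℝ) → (Fin d → ℝ) → ℝ)
    (hq0 : ∀ u, 0 ≤ q0 u) (hq0tot : (∫ u, q0 u) = 1)
    (hq : ∀ k u u', 0 ≤ q k u u') (hqtot : ∀ k u', (∫ u, q (k + 1) u u') = 1)
    (hl : ∀ k u, 0 < l k u)
    (hM0 : M0 = q0) (hG0 : G0 = l 0)
    (hMG : ∀ k u u', M (k + 1) u u' * G (k + 1) u u' =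
      l (k + 1) u * q (k + 1) u u' / l k u')
    (hlN : ∀ u, l N u = f u)
    (hZ : 0 < ∫ u, f u * qmarg q0 q N u)
    (hZint : Integrable fun u => f u * qmarg q0 q N u) :
    (fun u => FKmarg M0 G0 M G N u / ∫ w, FKmarg M0 G0 M G N w) =
      fun u => f u * qmarg q0 q N u / ∫ w, f w * qmarg q0 q N w :=
  stmt6_general q0 q l f M0 G0 M G hl hM0 hG0 hMG hlN
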